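/- Let F• be a finite chain complex of finitely generated free modules over a ring R with a chosen basis B, such that fₙ(b) ≠ 0 for all n ≥ 1 and b ∈ Bₙ. Then in the incidence poset P(F•, B), whenever a ≤ b, every maximal chain in P starting at a and ending at b has length d(b) − d(a), where d(x) = dim Δ(P_{≤x}). -/

import Mathlib

/-!
Sending a basis element to its degree is a rank function for the incidence poset: every
generating relation `c < b` raises the degree by exactly one. Hence the steps of a maximal
chain are generating relations, and a chain from `a` to `b` has length `deg b - deg a`.
On the other hand a chain below `b` has at most one element per degree, and, since no
differential kills a basis element, every element of positive degree lies above one of the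
next lower degree, so `P_{≤b}` contains a chain with one element in each degree `0, …, deg b`.
Thus `d(b) = deg b`.
-/

open scoped Classical

noncomputable section

namespace OrderComplex

variable {P : Type} (r : P → P → Prop)

/-- Dimension of the order complex of the induced subposet on `S`
(the empty complex has dimension `-1`). -/
def dimOC (S : Set P) : ℤ :=
  sSup {n : ℤ | ∃ s : Finset P, ↑s ⊆ S ∧ IsChain r ↑s ∧ n = (s.card : ℤ) - 1}

end OrderComplex

namespace IncidencePoset

open OrderComplex

variable {A : Type} [CommRing A] {ι : ℕ → Type}

/-- The covering relation generating the incidence poset of a complex of based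
free modules: `x ⋖ y` iff `y` is a basis element one degree above `x` and the
incidence coefficient `[y : x]` is nonzero. -/
def step (f : ∀ n, (ι (n + 1) →₀ A) →ₗ[A] (ι n →₀ A)) :
    (Σ n, ι n) → (Σ n, ι n) → Prop := fun x y =>
  ∃ (n : ℕ) (b : ι (n + 1)) (e : ι n),
    y = ⟨n + 1, b⟩ ∧ x = ⟨n, e⟩ ∧ e ∈ (f n (Finsupp.single b 1)).support

/-- The partial order of the incidence poset `P(F, B)`: the order generated by
the relations `e < b` whenever `[b : e] ≠ 0`. -/
def ile (f : ∀ n, (ι (n + 1) →₀ A) →ₗ[A] (ι n →₀ A)) :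
    (Σ n, ι n) → (Σ n, ι n) → Prop :=
  Relation.ReflTransGen (step f)

/-- Strict order of the incidence poset. -/
def ilt (f : ∀ n, (ι (n + 1) →₀ A) →ₗ[A] (ι n →₀ A)) :
    (Σ n, ι n) → (Σ n, ι n) → Prop :=
  Relation.TransGen (step f)

end IncidencePoset

namespace Relation

theorem TransGen.of_not_exists_between {α : Type*} {r : α → α → Prop} {x y : α}
    (h : TransGen r x y) (hsat : ¬∃ z, TransGen r x z ∧ TransGen r z y) : r x y := by
  obtain ⟨c, hxc, hcy⟩ := TransGen.head'_iff.mp h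
  rcases reflTransGen_iff_eq_or_transGen.mp hcy with rfl | hcy
  · exact hxc
  · exact absurd ⟨c, .single hxc, hcy⟩ hsat

section Graded

variable {α : Type*} {r : α → α → Prop} {φ : α → ℕ}

theorem ReflTransGen.rank_le (hφ : ∀ x y, r x y → φ y = φ x + 1) {x y : α}
    (h : ReflTransGen r x y) : φ x ≤ φ y := by
  induction h with
  | refl => rfl
  | tail _ hbc ih => rw [hφ _ _ hbc]; omega

theorem TransGen.rank_lt (hφ : ∀ x y, r x y → φ y = φ x + 1) {x y : α}
    (h : TransGen r x y) : φ x < φ y := by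
  obtain ⟨c, hxc, hcy⟩ := TransGen.tail'_iff.mp h
  rw [hφ _ _ hcy]
  exact Nat.lt_succ_of_le (hxc.rank_le hφ)

theorem rank_last_eq_add_of_chain (hφ : ∀ x y, r x y → φ y = φ x + 1) {l : ℕ}
    (g : Fin (l + 1) → α) (hg : ∀ i : Fin l, r (g i.castSucc) (g i.succ)) :
    φ (g (Fin.last l)) = φ (g 0) + l := by
  suffices ∀ i : Fin (l + 1), φ (g i) = φ (g 0) + i from this (Fin.last l)
  refine Fin.induction rfl fun i ih => ?_
  rw [Fin.val_succ, hφ _ _ (hg i), ih, Fin.val_castSucc, Nat.add_assoc]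

theorem card_le_rank_add_one_of_isChain (hφ : ∀ x y, r x y → φ y = φ x + 1) {b : α}
    {s : Finset α} (hsub : ∀ x ∈ s, ReflTransGen r x b) (hs : IsChain (ReflTransGen r) ↑s) :
    s.card ≤ φ b + 1 := by
  have hrank_lt {x y : α} (hxy : ReflTransGen r x y) (hne : x ≠ y) : φ x < φ y :=
    ((reflTransGen_iff_eq_or_transGen.mp hxy).resolve_left hne.symm).rank_lt hφ
  have hinj : Set.InjOn φ s := fun x hx y hy hxy => by
    by_contra hne
    rcases hs hx hy hne with h | h
    · exact (hrank_lt h hne).ne hxy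
    · exact (hrank_lt h (Ne.symm hne)).ne hxy.symm
  simpa using Finset.card_le_card_of_injOn φ
    (fun x hx => Finset.mem_range.mpr (Nat.lt_succ_of_le ((hsub x hx).rank_le hφ))) hinj

theorem exists_chain_card_eq_rank_add_one (hφ : ∀ x y, r x y → φ y = φ x + 1)
    (hpred : ∀ x, 0 < φ x → ∃ y, r y x) (b : α) :
    ∃ s : Finset α, (∀ x ∈ s, ReflTransGen r x b) ∧ IsChain (ReflTransGen r) ↑s ∧
      s.card = φ b + 1 := by
  induction hb : φ b generalizing b with
  | zero => exact ⟨{b}, by simp [ReflTransGen.refl], by simp, by simp⟩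
  | succ n ih =>
    obtain ⟨c, hcb⟩ := hpred b (by omega)
    obtain ⟨s, hsub, hs, hcard⟩ := ih c (by have := hφ _ _ hcb; omega)
    have hbelow : ∀ x ∈ s, ReflTransGen r x b := fun x hx => (hsub x hx).tail hcb
    have hb_notMem : b ∉ s := fun hbs => by
      have := (hsub b hbs).rank_le hφ
      have := hφ _ _ hcb
      omega
    refine ⟨insert b s, ?_, ?_, by rw [Finset.card_insert_of_notMem hb_notMem, hcard]⟩
    · simpa using ⟨ReflTransGen.refl, hbelow⟩
    · rw [Finset.coe_insert]
      exact hs.insert fun x hx _ => Or.inr (hbelow x hx)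

end Graded

theorem dimOC_setOf_reflTransGen_eq_rank {α : Type} {r : α → α → Prop} {φ : α → ℕ}
    (hφ : ∀ x y, r x y → φ y = φ x + 1) (hpred : ∀ x, 0 < φ x → ∃ y, r y x) (b : α) :
    OrderComplex.dimOC (ReflTransGen r) {x | ReflTransGen r x b} = φ b := by
  have hbound : ∀ n ∈ {n : ℤ | ∃ s : Finset α, ↑s ⊆ {x | ReflTransGen r x b} ∧
      IsChain (ReflTransGen r) ↑s ∧ n = (s.card : ℤ) - 1}, n ≤ φ b := by
    rintro _ ⟨t, htsub, ht, rfl⟩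
    have := card_le_rank_add_one_of_isChain hφ htsub ht
    omega
  obtain ⟨s, hsub, hs, hcard⟩ := exists_chain_card_eq_rank_add_one hφ hpred b
  have hmem : (φ b : ℤ) ∈ {n : ℤ | ∃ s : Finset α, ↑s ⊆ {x | ReflTransGen r x b} ∧
      IsChain (ReflTransGen r) ↑s ∧ n = (s.card : ℤ) - 1} := ⟨s, hsub, hs, by omega⟩
  exact le_antisymm (csSup_le ⟨_, hmem⟩ hbound) (le_csSup ⟨_, hbound⟩ hmem)

end Relation

namespace IncidencePoset

open OrderComplex

variable {A : Type} [CommRing A] {ι : ℕ → Type} {f : ∀ n, (ι (n + 1) →₀ A) →ₗ[A] (ι n →₀ A)}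

theorem fst_eq_of_step : ∀ x y : Σ n, ι n, step f x y → y.1 = x.1 + 1 := by
  rintro _ _ ⟨n, b, e, rfl, rfl, -⟩
  rfl

theorem exists_step_of_fst_pos (hnz : ∀ (n : ℕ) (b : ι (n + 1)), f n (Finsupp.single b 1) ≠ 0) :
    ∀ x : Σ n, ι n, 0 < x.1 → ∃ y, step f y x := by
  rintro ⟨_ | n, b⟩ hpos
  · exact absurd hpos (lt_irrefl 0)
  · obtain ⟨e, he⟩ := Finsupp.support_nonempty_iff.mpr (hnz n b)
    exact ⟨⟨n, e⟩, n, b, e, rfl, rfl, he⟩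

theorem dimOC_setOf_ile_eq_fst (hnz : ∀ (n : ℕ) (b : ι (n + 1)), f n (Finsupp.single b 1) ≠ 0)
    (b : Σ n, ι n) : dimOC (ile f) {x | ile f x b} = b.1 :=
  Relation.dimOC_setOf_reflTransGen_eq_rank fst_eq_of_step (exists_step_of_fst_pos hnz) b

theorem maximal_chain_length_eq_general
    (A : Type) [CommRing A] (ι : ℕ → Type)
    (f : ∀ n, (ι (n + 1) →₀ A) →ₗ[A] (ι n →₀ A))
    (hnz : ∀ (n : ℕ) (b : ι (n + 1)), f n (Finsupp.single b 1) ≠ 0) :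
    ∀ (a b : Σ n, ι n), ile f a b →
      ∀ (l : ℕ) (g : Fin (l + 1) → (Σ n, ι n)),
        g 0 = a → g (Fin.last l) = b →
        (∀ i : Fin l, ilt f (g i.castSucc) (g i.succ)) →
        (∀ i : Fin l, ¬ ∃ z, ilt f (g i.castSucc) z ∧ ilt f z (g i.succ)) →
        (l : ℤ) = dimOC (ile f) {x | ile f x b} - dimOC (ile f) {x | ile f x a} := by
  rintro a b - l g rfl rfl hlt hsat
  have hsteps : ∀ i : Fin l, step f (g i.castSucc) (g i.succ) :=
    fun i => (hlt i).of_not_exists_between (hsat i)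
  have hlen := Relation.rank_last_eq_add_of_chain fst_eq_of_step g hsteps
  rw [dimOC_setOf_ile_eq_fst hnz, dimOC_setOf_ile_eq_fst hnz]
  omega

/-- in the incidence poset of a finite chain complex of finitely
generated free modules with basis whose differentials do not kill basis
elements, whenever `a ≤ b`, every maximal (i.e. saturated) chain from `a` to
`b` has length `d(b) - d(a)`, where `d(x) = dim Δ(P_{≤x})`. -/
theorem maximal_chain_length_eq
    (A : Type) [CommRing A] (ι : ℕ → Type) [∀ n, Fintype (ι n)]
    (f : ∀ n, (ι (n + 1) →₀ A) →ₗ[A] (ι n →₀ A))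
    (l0 : ℕ) (hl : ∀ n, l0 < n → IsEmpty (ι n))
    (hnz : ∀ (n : ℕ) (b : ι (n + 1)), f n (Finsupp.single b 1) ≠ 0) :
    ∀ (a b : Σ n, ι n), ile f a b →
      ∀ (l : ℕ) (g : Fin (l + 1) → (Σ n, ι n)),
        g 0 = a → g (Fin.last l) = b →
        (∀ i : Fin l, ilt f (g i.castSucc) (g i.succ)) →
        (∀ i : Fin l, ¬ ∃ z, ilt f (g i.castSucc) z ∧ ilt f z (g i.succ)) →
        (l : ℤ) = dimOC (ile f) {x | ile f x b} - dimOC (ile f) {x | ile f x a} :=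
  maximal_chain_length_eq_general A ι f hnz

end IncidencePoset
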